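/- Let N = (S,T,F,M0,ℓ) be a Petri net and N′ = (S′,T′,F′,M0′,ℓ′) a plain Petri net with S′ ⊆ S and M0′ = M0 ↾ S′. Suppose: (1) for every t ∈ T with ℓ(t) ≠ τ there are t′ ∈ T′ with ℓ′(t′) = ℓ(t) and a finite multiset G ∈ ℕ^T with ℓ(G) ≡ ∅ and ⟦t′⟧ = ⟦t + G⟧; (2) for every finite signed multiset G ∈ ℤ^T with ℓ(G) ≡ ∅, every M′ ∈ ℕ^{S′}, U′ ∈ ℕ^{T′} and U ∈ ℕ^T with ℓ′(U′) = ℓ(U), M′ + •U′ ∈ [M0′⟩_{N′}, and M := M′ + •U′ + (M0 − M0′) + ⟦G⟧ − •U ∈ ℕ^S with M + •U ∈ [M0⟩_N, it holds that: (a) there is no infinite sequence M —τ→ M1 —τ→ M2 —τ→ ⋯; (b) if M′ —a→ with a ∈ Act then M —a→ or M —τ→; (c) if M —a→ with a ∈ Act then M′ —a→. Then N and N′ are branching ST-bisimilar with explicit divergence (N ≈Δ_bSTb N′). -/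

import Mathlib

open scoped Classical

/-- A labelled Petri net over the set `A` of visible actions (a transition labelled
`none` is a τ-(internal) transition), with places drawn from the universe `P` and
transitions drawn from the universe `Tr`.  `pre t p` is the arc weight `F(p,t)` and
`post t p` is the arc weight `F(t,p)`. -/
structure PNet (P Tr A : Type) where
  places : Set P
  trans : Set Tr
  pre : Tr → P → ℕ
  post : Tr → P → ℕ
  M0 : P → ℕ
  l : Tr → Option A
  pre_wf : ∀ t p, pre t p ≠ 0 → t ∈ trans ∧ p ∈ places
  post_wf : ∀ t p, post t p ≠ 0 → t ∈ trans ∧ p ∈ places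
  M0_wf : ∀ p, M0 p ≠ 0 → p ∈ places

namespace PNet

variable {P Tr A : Type}

/-- `•G`, for a finite multiset `G` of transitions. -/
def preStep (N : PNet P Tr A) (G : Tr →₀ ℕ) : P → ℕ :=
  fun p => G.sum fun t n => n * N.pre t p

/-- `G•`, for a finite multiset `G` of transitions. -/
def postStep (N : PNet P Tr A) (G : Tr →₀ ℕ) : P → ℕ :=
  fun p => G.sum fun t n => n * N.post t p

/-- `M [G⟩ M'` : the (nonempty, finite) multiset `G` of transitions is a step from
`M` to `M'`. -/
def IsStep (N : PNet P Tr A) (M : P → ℕ) (G : Tr →₀ ℕ) (M' : P → ℕ) : Prop :=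
  G ≠ 0 ∧ ↑G.support ⊆ N.trans ∧ (∀ p, N.preStep G p ≤ M p) ∧
    ∀ p, M' p = M p - N.preStep G p + N.postStep G p

/-- `[M0⟩` : the set of reachable markings. -/
inductive Reachable (N : PNet P Tr A) : (P → ℕ) → Prop
  | refl : Reachable N N.M0
  | step {M G M'} : Reachable N M → N.IsStep M G M' → Reachable N M'

/-- The transition `t` is enabled under the marking `M`. -/
def enabled (N : PNet P Tr A) (M : P → ℕ) (t : Tr) : Prop :=
  t ∈ N.trans ∧ ∀ p, N.pre t p ≤ M p

/-- The concurrency relation `t ⌣ u`. -/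
def Conc (N : PNet P Tr A) (t u : Tr) : Prop :=
  t ∈ N.trans ∧ u ∈ N.trans ∧ ∃ M, N.Reachable M ∧ ∀ p, N.pre t p + N.pre u p ≤ M p

/-- Firing of a single transition: `M [\{t\}⟩ M'`. -/
def fire (N : PNet P Tr A) (M : P → ℕ) (t : Tr) (M' : P → ℕ) : Prop :=
  N.enabled M t ∧ ∀ p, M' p = M p - N.pre t p + N.post t p

/-- `M —τ→ M'`. -/
def tauFire (N : PNet P Tr A) (M M' : P → ℕ) : Prop :=
  ∃ t, N.l t = none ∧ N.fire M t M'

/-- `M —a→ M'` for a visible action `a`. -/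
def visFire (N : PNet P Tr A) (a : A) (M M' : P → ℕ) : Prop :=
  ∃ t, N.l t = some a ∧ N.fire M t M'

/-- `M ⟹ M'` : the reflexive-transitive closure of `—τ→`. -/
def Taus (N : PNet P Tr A) : (P → ℕ) → (P → ℕ) → Prop :=
  Relation.ReflTransGen N.tauFire

/-- `M ⟹σ⟹ M'` for a sequence `σ` of visible actions. -/
def seqReach (N : PNet P Tr A) : List A → (P → ℕ) → (P → ℕ) → Prop
  | [], M, M' => N.Taus M M'
  | a :: σ, M, M'' => ∃ M1 M2, N.Taus M M1 ∧ N.visFire a M1 M2 ∧ N.seqReach σ M2 M''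

/-- `ℓ(G)(a)` : the number of occurrences of the visible action `a` in the finite
multiset `G` of transitions. -/
noncomputable def labCount (N : PNet P Tr A) (G : Tr →₀ ℕ) (a : A) : ℕ :=
  ∑ t ∈ G.support, if N.l t = some a then G t else 0

/-- `ℓ(G)(a)` for a finite signed multiset `G` of transitions. -/
noncomputable def labCountZ (N : PNet P Tr A) (G : Tr →₀ ℤ) (a : A) : ℤ :=
  ∑ t ∈ G.support, if N.l t = some a then G t else 0

/-- `ℓ(G) ≡ ∅` : the signed multiset `G` contains no visible actions. -/
def SilentZ (N : PNet P Tr A) (G : Tr →₀ ℤ) : Prop := ∀ a, N.labCountZ G a = 0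

/-- The token replacement `⟦G⟧ = G• − •G` of a finite signed multiset of transitions. -/
noncomputable def tok (N : PNet P Tr A) (G : Tr →₀ ℤ) : P → ℤ :=
  fun p => ∑ t ∈ G.support, G t * ((N.post t p : ℤ) - (N.pre t p : ℤ))

/-- The token replacement `⟦G⟧ = G• − •G` of a finite multiset of transitions. -/
noncomputable def tokN (N : PNet P Tr A) (G : Tr →₀ ℕ) : P → ℤ :=
  fun p => ∑ t ∈ G.support, (G t : ℤ) * ((N.post t p : ℤ) - (N.pre t p : ℤ))

/-- `M —X→` : a step with multiset of visible labels `X ∈ ℕ^Act` is enabled in `M`. -/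
def stepTo (N : PNet P Tr A) (M : P → ℕ) (X : A → ℕ) : Prop :=
  ∃ G : Tr →₀ ℕ, G ≠ 0 ∧ ↑G.support ⊆ N.trans ∧ (∀ t ∈ G.support, N.l t ≠ none) ∧
    (∀ p, N.preStep G p ≤ M p) ∧ ∀ a, N.labCount G a = X a

/-- `⟨σ, X⟩` is a step ready pair of `N`. -/
def StepReadyPair (N : PNet P Tr A) (σ : List A) (X : Set (A → ℕ)) : Prop :=
  ∃ M, N.seqReach σ N.M0 M ∧ (∀ M', ¬ N.tauFire M M') ∧ X = {Y | N.stepTo M Y}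

/-- A net is plain iff its labelling is injective and no transition is labelled τ. -/
def Plain (N : PNet P Tr A) : Prop :=
  (∀ t ∈ N.trans, N.l t ≠ none) ∧
    ∀ t ∈ N.trans, ∀ u ∈ N.trans, N.l t = N.l u → t = u

/-- A structural conflict net: concurrent transitions have no common preplace. -/
def StructuralConflict (N : PNet P Tr A) : Prop :=
  ∀ t u, N.Conc t u → ∀ p, N.pre t p = 0 ∨ N.pre u p = 0

/-- A finitary net: every transition has a preplace, and every reachable marking is
finite and enables only finitely many transitions. -/
def Finitary (N : PNet P Tr A) : Prop :=
  (∀ t ∈ N.trans, ∃ p, N.pre t p ≠ 0) ∧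
    ∀ M, N.Reachable M → {p | M p ≠ 0}.Finite ∧ {t | N.enabled M t}.Finite

/-- `N` has a fully reachable pure M. -/
def FullyReachablePureM (N : PNet P Tr A) : Prop :=
  ∃ t u v : Tr, t ∈ N.trans ∧ u ∈ N.trans ∧ v ∈ N.trans ∧
    (∃ p, N.pre t p ≠ 0 ∧ N.pre u p ≠ 0) ∧
    (∃ p, N.pre u p ≠ 0 ∧ N.pre v p ≠ 0) ∧
    (∀ p, N.pre t p = 0 ∨ N.pre v p = 0) ∧
    ∃ M, N.Reachable M ∧ ∀ p, max (max (N.pre t p) (N.pre u p)) (N.pre v p) ≤ M p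

/-- `N` is distributed w.r.t. the distribution `D`. -/
def DistributedWrt (N : PNet P Tr A) {Loc : Type} (D : P ⊕ Tr → Loc) : Prop :=
  (∀ t p, N.pre t p ≠ 0 → D (Sum.inr t) = D (Sum.inl p)) ∧
    ∀ t u, N.Conc t u → D (Sum.inr t) ≠ D (Sum.inr u)

/-- `N` is a distributed net. -/
def Distributed (N : PNet P Tr A) : Prop :=
  ∃ (Loc : Type) (D : P ⊕ Tr → Loc), N.DistributedWrt D

/-- `N` is essentially distributed w.r.t. the distribution `D`. -/
def EssentiallyDistributedWrt (N : PNet P Tr A) {Loc : Type} (D : P ⊕ Tr → Loc) : Prop :=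
  (∀ t p, N.pre t p ≠ 0 → D (Sum.inr t) = D (Sum.inl p)) ∧
    ∀ t u, N.Conc t u → N.l t ≠ none → D (Sum.inr t) ≠ D (Sum.inr u)

def EssentiallyDistributed (N : PNet P Tr A) : Prop :=
  ∃ (Loc : Type) (D : P ⊕ Tr → Loc), N.EssentiallyDistributedWrt D

/-- `N` is externally distributed w.r.t. the distribution `D`. -/
def ExternallyDistributedWrt (N : PNet P Tr A) {Loc : Type} (D : P ⊕ Tr → Loc) : Prop :=
  (∀ t p, N.pre t p ≠ 0 → D (Sum.inr t) = D (Sum.inl p)) ∧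
    ∀ t u, N.Conc t u → N.l t ≠ none → N.l u ≠ none → D (Sum.inr t) ≠ D (Sum.inr u)

def ExternallyDistributed (N : PNet P Tr A) : Prop :=
  ∃ (Loc : Type) (D : P ⊕ Tr → Loc), N.ExternallyDistributedWrt D

/-- The generating relation of the canonical co-location relation: a transition is
co-located with each of its preplaces. -/
def canonGen (N : PNet P Tr A) : (P ⊕ Tr) → (P ⊕ Tr) → Prop :=
  fun x y => ∃ t p, x = Sum.inr t ∧ y = Sum.inl p ∧ N.pre t p ≠ 0

/-- The canonical co-location relation `≡_C`. -/
def canonRel (N : PNet P Tr A) : (P ⊕ Tr) → (P ⊕ Tr) → Prop :=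
  Relation.EqvGen N.canonGen

/-- The canonical distribution, mapping every net element to its `≡_C`-class. -/
def canonDist (N : PNet P Tr A) : (P ⊕ Tr) → Quot N.canonRel := Quot.mk _

/-- The flow relation `F` on `S ∪ T`. -/
def flow (N : PNet P Tr A) : P ⊕ Tr → P ⊕ Tr → ℕ
  | Sum.inl p, Sum.inr t => N.pre t p
  | Sum.inr t, Sum.inl p => N.post t p
  | _, _ => 0

/-- `F ↾ (S ∪ T⁺)` is acyclic. -/
def AcyclicOn (N : PNet P Tr A) (Tp : Set Tr) : Prop :=
  ∀ x : P ⊕ Tr, ¬ Relation.TransGen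
    (fun x y => N.flow x y ≠ 0 ∧ (∀ t, x = Sum.inr t → t ∈ Tp) ∧
      (∀ t, y = Sum.inr t → t ∈ Tp)) x x

/-- A path in `N`, as a nonempty alternating list of net elements. -/
def IsPathList (N : PNet P Tr A) (π : List (P ⊕ Tr)) : Prop :=
  π ≠ [] ∧ π.Chain' fun x y => N.flow x y ≠ 0

/-- The arc weight `F(π)` of a path `π`. -/
def pathWeight (N : PNet P Tr A) (π : List (P ⊕ Tr)) : ℕ :=
  ((π.zip π.tail).map fun q => N.flow q.1 q.2).prod

/-- A faithful place w.r.t. `T⁺` and `S⁺`, i.e. `|{s} ∩ S⁺| + ∑_{t ∈ T⁺} F(t,s) = 1`. -/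
def FaithfulPlace (N : PNet P Tr A) (Tp : Set Tr) (Sp : Set P) (s : P) : Prop :=
  (s ∈ Sp ∧ ∀ t ∈ Tp, N.post t s = 0) ∨
    (s ∉ Sp ∧ ∃ t ∈ Tp, N.post t s = 1 ∧ ∀ u ∈ Tp, u ≠ t → N.post u s = 0)

/-- A faithful path w.r.t. `T⁺` and `S⁺`: all nodes but the last are transitions
in `T⁺` or faithful places. -/
def FaithfulPath (N : PNet P Tr A) (Tp : Set Tr) (Sp : Set P) (π : List (P ⊕ Tr)) : Prop :=
  N.IsPathList π ∧ ∀ x ∈ π.dropLast,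
    (∃ t ∈ Tp, x = Sum.inr t) ∨ ∃ s, x = Sum.inl s ∧ N.FaithfulPlace Tp Sp s

/-- The multiset `*x` of faithful origins of a net element `x`, w.r.t. `T⁺` and `S⁺`. -/
noncomputable def faithOrig (N : PNet P Tr A) (Tp : Set Tr) (Sp : Set P) (x : P ⊕ Tr) :
    P → ℕ∞ :=
  fun s => sSup {w : ℕ∞ | ∃ π : List (P ⊕ Tr), s ∈ Sp ∧ N.FaithfulPath Tp Sp π ∧
    π.head? = some (Sum.inl s) ∧ π.getLast? = some x ∧ w = (N.pathWeight π : ℕ∞)}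

end PNet

/-- A labelled transition system over visible labels `L` (the invisible action τ is
represented by `none`). -/
structure LTS (St L : Type) where
  init : St
  tr : St → Option L → St → Prop

namespace LTS

variable {St L : Type}

/-- `⟹` : the reflexive-transitive closure of `—τ→`. -/
def Taus (Lt : LTS St L) : St → St → Prop :=
  Relation.ReflTransGen fun s s' => Lt.tr s none s'

/-- `s —(η)→ s'` : an `η`-transition that may stay put when `η = τ`. -/
def OptTr (Lt : LTS St L) (s : St) (η : Option L) (s' : St) : Prop :=
  Lt.tr s η s' ∨ (η = none ∧ s = s')

/-- The state `s` admits an infinite sequence of τ-transitions. -/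
def Diverges (Lt : LTS St L) (s : St) : Prop :=
  ∃ f : ℕ → St, f 0 = s ∧ ∀ n, Lt.tr (f n) none (f (n + 1))

def ReachableState (Lt : LTS St L) (s : St) : Prop :=
  Relation.ReflTransGen (fun x y => ∃ η, Lt.tr x η y) Lt.init s

/-- A deterministic LTS: no reachable state admits a τ-transition, and visible
transitions from reachable states are deterministic. -/
def Deterministic (Lt : LTS St L) : Prop :=
  ∀ s, Lt.ReachableState s →
    (∀ s', ¬ Lt.tr s none s') ∧
      ∀ a s' s'', Lt.tr s (some a) s' → Lt.tr s (some a) s'' → s' = s''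

end LTS

/-- `B` is a branching bisimulation between the two LTSs. -/
def IsBranchingBisim {St1 St2 L : Type} (L1 : LTS St1 L) (L2 : LTS St2 L)
    (B : St1 → St2 → Prop) : Prop :=
  B L1.init L2.init ∧
    (∀ s1 s2 η s1', B s1 s2 → L1.tr s1 η s1' →
      ∃ s2d s2', L2.Taus s2 s2d ∧ L2.OptTr s2d η s2' ∧ B s1 s2d ∧ B s1' s2') ∧
    ∀ s1 s2 η s2', B s1 s2 → L2.tr s2 η s2' →
      ∃ s1d s1', L1.Taus s1 s1d ∧ L1.OptTr s1d η s1' ∧ B s1d s2 ∧ B s1' s2'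

/-- The two LTSs are branching bisimilar. -/
def BranchingBisimilar {St1 St2 L : Type} (L1 : LTS St1 L) (L2 : LTS St2 L) : Prop :=
  ∃ B, IsBranchingBisim L1 L2 B

/-- The two LTSs are branching bisimilar with explicit divergence. -/
def BranchingBisimilarED {St1 St2 L : Type} (L1 : LTS St1 L) (L2 : LTS St2 L) : Prop :=
  ∃ B, IsBranchingBisim L1 L2 B ∧
    ∀ s1 s2, B s1 s2 → (L1.Diverges s1 ↔ L2.Diverges s2)

/-- The visible action phases `a⁺` and `a⁻ⁿ` (here `n` is the 0-based position of the
terminating transition in the sequence of transitions currently firing). -/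
inductive STLabel (A : Type) : Type
  | plus (a : A)
  | minus (a : A) (n : ℕ)

/-- The visible action phases `a⁺` and `a⁻` of split semantics. -/
inductive SplitLabel (A : Type) : Type
  | plus (a : A)
  | minus (a : A)

/-- The map `η ↦ η‾` from ST-action phases to split action phases. -/
def STLabel.bar {A : Type} : STLabel A → SplitLabel A
  | .plus a => .plus a
  | .minus a _ => .minus a

namespace PNet

variable {P Tr A : Type}

/-- The ST-transition relations between ST-markings. -/
def stTr (N : PNet P Tr A) :
    ((P → ℕ) × List Tr) → Option (STLabel A) → ((P → ℕ) × List Tr) → Prop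
  | s, some (STLabel.plus a), s' => ∃ t, N.l t = some a ∧ N.enabled s.1 t ∧
      (∀ p, s'.1 p = s.1 p - N.pre t p) ∧ s'.2 = s.2 ++ [t]
  | s, some (STLabel.minus a n), s' => ∃ t, s.2[n]? = some t ∧ N.l t = some a ∧
      s'.2 = s.2.eraseIdx n ∧ ∀ p, s'.1 p = s.1 p + N.post t p
  | s, none, s' => ∃ t, N.l t = none ∧ N.fire s.1 t s'.1 ∧ s'.2 = s.2

/-- The ST-LTS associated to a net. -/
def stLTS (N : PNet P Tr A) : LTS ((P → ℕ) × List Tr) (STLabel A) :=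
  ⟨(N.M0, []), N.stTr⟩

/-- The split transition relations between split markings. -/
def splitTr (N : PNet P Tr A) :
    ((P → ℕ) × Multiset Tr) → Option (SplitLabel A) → ((P → ℕ) × Multiset Tr) → Prop
  | s, some (SplitLabel.plus a), s' => ∃ t, N.l t = some a ∧ N.enabled s.1 t ∧
      (∀ p, s'.1 p = s.1 p - N.pre t p) ∧ s'.2 = s.2 + {t}
  | s, some (SplitLabel.minus a), s' => ∃ t, N.l t = some a ∧ s.2 = s'.2 + {t} ∧
      ∀ p, s'.1 p = s.1 p + N.post t p
  | s, none, s' => ∃ t, N.l t = none ∧ N.fire s.1 t s'.1 ∧ s'.2 = s.2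

/-- The split LTS associated to a net. -/
def splitLTS (N : PNet P Tr A) : LTS ((P → ℕ) × Multiset Tr) (SplitLabel A) :=
  ⟨(N.M0, 0), N.splitTr⟩

end PNet

/-- `N1 ≈Δ_bSTb N2` : branching ST-bisimilarity with explicit divergence. -/
def BranchingSTBisimilarED {P1 T1 P2 T2 A : Type}
    (N1 : PNet P1 T1 A) (N2 : PNet P2 T2 A) : Prop :=
  BranchingBisimilarED N1.stLTS N2.stLTS

/-- `N1 ≈R N2` : step readiness equivalence. -/
def StepReadinessEquiv {P1 T1 P2 T2 A : Type}
    (N1 : PNet P1 T1 A) (N2 : PNet P2 T2 A) : Prop :=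
  ∀ σ X, N1.StepReadyPair σ X ↔ N2.StepReadyPair σ X

/-- A component with interface `(I, O)`. -/
structure NetComponent (P Tr A : Type) where
  net : PNet P Tr A
  I : Set P
  O : Set P
  I_sub : I ⊆ net.places
  O_sub : O ⊆ net.places
  disjIO : Disjoint I O
  O_noPost : ∀ p ∈ O, ∀ t, net.pre t p = 0

/-- A sequential component with interface: some set `Q` of private places carries
exactly one token initially, and every transition consumes and produces exactly one
token in `Q`. -/
def NetComponent.Sequential {P Tr A : Type} (C : NetComponent P Tr A) : Prop :=
  ∃ Q : Set P, Q ⊆ C.net.places \ (C.I ∪ C.O) ∧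
    (∀ t ∈ C.net.trans,
      (∃ q ∈ Q, C.net.pre t q = 1 ∧ ∀ q' ∈ Q, q' ≠ q → C.net.pre t q' = 0) ∧
        ∃ q ∈ Q, C.net.post t q = 1 ∧ ∀ q' ∈ Q, q' ≠ q → C.net.post t q' = 0) ∧
    ∃ q ∈ Q, C.net.M0 q = 1 ∧ ∀ q' ∈ Q, q' ≠ q → C.net.M0 q' = 0

/-- The components of the family `C` are pairwise composable: disjoint except for
shared interface places, and with pairwise disjoint sets of input places. -/
def Composable {K P Tr A : Type} (C : K → NetComponent P Tr A) : Prop :=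
  (∀ k l, k ≠ l → Disjoint (C k).net.trans (C l).net.trans) ∧
    (∀ k l, k ≠ l →
      (C k).net.places ∩ (C l).net.places =
        ((C k).I ∪ (C k).O) ∩ ((C l).I ∪ (C l).O)) ∧
    ∀ k l, k ≠ l → Disjoint (C k).I (C l).I

/-- `D = ‖_{k ∈ K} C k` : `D` is the asynchronous parallel composition of the
family `C` of components. -/
structure IsParComp {K P Tr A : Type} (C : K → NetComponent P Tr A)
    (D : NetComponent P Tr A) : Prop where
  places_eq : D.net.places = ⋃ k, (C k).net.places
  trans_eq : D.net.trans = ⋃ k, (C k).net.trans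
  pre_eq : ∀ k, ∀ t ∈ (C k).net.trans, ∀ p, D.net.pre t p = (C k).net.pre t p
  post_eq : ∀ k, ∀ t ∈ (C k).net.trans, ∀ p, D.net.post t p = (C k).net.post t p
  M0_eq : ∀ p, D.net.M0 p = finsum fun k => (C k).net.M0 p
  l_eq : ∀ k, ∀ t ∈ (C k).net.trans, D.net.l t = (C k).net.l t
  I_eq : D.I = ⋃ k, (C k).I
  O_eq : D.O = (⋃ k, (C k).O) \ ⋃ k, (C k).I

/-- An LSGA net: an asynchronous parallel composition of sequential components
with interface. -/
def IsLSGA {P Tr A : Type} (N : PNet P Tr A) : Prop :=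
  ∃ (K : Type) (C : K → NetComponent P Tr A) (D : NetComponent P Tr A),
    Composable C ∧ (∀ k, (C k).Sequential) ∧ IsParComp C D ∧ D.net = N

/-!
The witness is the relation between ST-markings `(M, U)` of `N` and `(M', U')` of `N'` in which
`U` and `U'` carry the same labels position by position and `M` satisfies the marking equation of
condition (2) for some silent signed multiset `G`. A τ-step of `N` is absorbed into `G`. An `a⁺`
of `N` is matched by (2c); an `a⁺` of `N'` is matched by (2b), which lets `N` either start an `a`
or make a τ-step, and by (2a) the τ-steps cannot go on forever. For an `a⁻` the terminating
transitions have the same label, so, `N'` being plain, (1) pairs them up and supplies the silent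
correction of `G`. No related state diverges: `N` by (2a), and `N'` has no τ-transitions at all.
-/

theorem LTS.diverges_iff_not_acc {St L : Type} (Lt : LTS St L) (s : St) :
    Lt.Diverges s ↔ ¬ Acc (fun x y => Lt.tr y none x) s := by
  rw [not_acc_iff_exists_descending_chain, LTS.Diverges]

theorem Acc.exists_reflTransGen {α : Type*} {r : α → α → Prop} {p q : α → Prop} {a : α}
    (ha : Acc (fun x y => r y x) a) (hp : p a) (hstep : ∀ x y, p x → r x y → p y)
    (hprog : ∀ x, p x → q x ∨ ∃ y, r x y) :
    ∃ b, Relation.ReflTransGen r a b ∧ p b ∧ q b := by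
  induction ha with
  | intro x _ ih =>
    rcases hprog x hp with hq | ⟨y, hy⟩
    · exact ⟨x, .refl, hp, hq⟩
    · obtain ⟨b, hb, hpb, hqb⟩ := ih y hy (hstep x y hp hy)
      exact ⟨b, .head hy hb, hpb, hqb⟩

theorem List.exists_getElem?_of_map_eq {α β γ : Type*} {f : α → γ} {g : β → γ}
    {l₁ : List α} {l₂ : List β} (h : l₁.map f = l₂.map g) {n : ℕ} {a : α}
    (hn : l₁[n]? = some a) : ∃ b, l₂[n]? = some b ∧ g b = f a := by
  have := congrArg (·[n]?) h
  simpa [hn, eq_comm] using this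

theorem Multiset.toFinsupp_cons {α : Type*} [DecidableEq α] (a : α) (s : Multiset α) :
    Multiset.toFinsupp (a ::ₘ s) = Finsupp.single a 1 + Multiset.toFinsupp s := by
  rw [← Multiset.singleton_add, Multiset.toFinsupp_add, Multiset.toFinsupp_singleton]

theorem Multiset.toFinsupp_coe_eq_single_add_eraseIdx {α : Type*} [DecidableEq α]
    {l : List α} {n : ℕ} {a : α} (hn : l[n]? = some a) :
    Multiset.toFinsupp ↑l = Finsupp.single a 1 + Multiset.toFinsupp ↑(l.eraseIdx n) := by
  obtain ⟨hlt, rfl⟩ := List.getElem?_eq_some_iff.1 hn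
  rw [← Multiset.toFinsupp_cons, Multiset.cons_coe,
    Multiset.coe_eq_coe.2 (List.getElem_cons_eraseIdx_perm hlt)]

namespace PNet

variable {P Tr A : Type} (N : PNet P Tr A)

theorem preStep_add (G H : Tr →₀ ℕ) (p : P) :
    N.preStep (G + H) p = N.preStep G p + N.preStep H p :=
  Finsupp.sum_add_index' (fun _ => zero_mul _) fun _ _ _ => add_mul _ _ _

theorem preStep_single (t : Tr) (p : P) : N.preStep (Finsupp.single t 1) p = N.pre t p := by
  simp [preStep]

theorem postStep_single (t : Tr) (p : P) : N.postStep (Finsupp.single t 1) p = N.post t p := by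
  simp [postStep]

theorem tok_add (G H : Tr →₀ ℤ) (p : P) : N.tok (G + H) p = N.tok G p + N.tok H p :=
  Finsupp.sum_add_index' (h := fun t n => n * ((N.post t p : ℤ) - N.pre t p))
    (fun _ => zero_mul _) fun _ _ _ => add_mul _ _ _

theorem tok_sub (G H : Tr →₀ ℤ) (p : P) : N.tok (G - H) p = N.tok G p - N.tok H p :=
  Finsupp.sum_sub_index (h := fun t n => n * ((N.post t p : ℤ) - N.pre t p))
    fun _ _ _ => sub_mul _ _ _

theorem tok_single (t : Tr) (p : P) :
    N.tok (Finsupp.single t 1) p = (N.post t p : ℤ) - N.pre t p := by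
  simp [tok]

theorem tok_mapRange_natCast (G : Tr →₀ ℕ) (p : P) :
    N.tok (G.mapRange (↑) Nat.cast_zero) p = N.tokN G p := by
  simp [tok, tokN, Finsupp.support_mapRange_of_injective _ _ Nat.cast_injective]

theorem silentZ_zero : N.SilentZ 0 := fun _ => Finsupp.sum_zero_index

variable {N} in
theorem SilentZ.add {G H : Tr →₀ ℤ} (hG : N.SilentZ G) (hH : N.SilentZ H) :
    N.SilentZ (G + H) := fun a => by
  refine (Finsupp.sum_add_index' (h := fun t n => if N.l t = some a then n else 0) (by simp)
    (by intros; split_ifs <;> simp)).trans ?_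
  exact congrArg₂ (· + ·) (hG a) (hH a)

variable {N} in
theorem SilentZ.sub {G H : Tr →₀ ℤ} (hG : N.SilentZ G) (hH : N.SilentZ H) :
    N.SilentZ (G - H) := fun a => by
  refine (Finsupp.sum_sub_index (h := fun t n => if N.l t = some a then n else 0)
    (by intros; split_ifs <;> simp)).trans ?_
  exact congrArg₂ (· - ·) (hG a) (hH a)

theorem silentZ_single {t : Tr} (ht : N.l t = none) : N.SilentZ (Finsupp.single t 1) :=
  fun a => by simp [labCountZ, ht]

theorem silentZ_mapRange_natCast {G : Tr →₀ ℕ} (hG : ∀ u ∈ G.support, N.l u = none) :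
    N.SilentZ (G.mapRange (↑) Nat.cast_zero) := fun a => by
  refine Finset.sum_eq_zero fun t ht => ?_
  rw [Finsupp.support_mapRange_of_injective _ _ Nat.cast_injective] at ht
  simp [hG t ht]

theorem labCount_toFinsupp (s : Multiset Tr) (a : A) :
    N.labCount (Multiset.toFinsupp s) a = (s.map N.l).count (some a) := by
  simp only [labCount, Multiset.toFinsupp_support, Multiset.toFinsupp_apply, Multiset.count_map,
    ← Finset.sum_filter, ← Multiset.toFinset_sum_count_eq, Multiset.toFinset_filter]
  refine Finset.sum_congr (by simp [eq_comm]) fun t ht => ?_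
  rw [Multiset.count_filter_of_pos (p := fun u => some a = N.l u) (Finset.mem_filter.1 ht).2]

variable {N} in
theorem Reachable.of_fire {M M₁ : P → ℕ} {t : Tr} (hM : N.Reachable M) (hf : N.fire M t M₁) :
    N.Reachable M₁ :=
  hM.step (G := Finsupp.single t 1) ⟨by simp, by simpa using hf.1.1,
    fun p => by simpa [preStep_single] using hf.1.2 p,
    fun p => by rw [hf.2 p, preStep_single, postStep_single]⟩

variable {Tr' : Type} (N' : PNet P Tr' A)

/-- The premises of condition (2) of the theorem: `U'` and `U` are the multisets of transitions
currently firing in `N'` and `N`, and `M` is the marking determined by the marking equation. -/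
structure Coupled (G : Tr →₀ ℤ) (M' : P → ℕ) (U' : Tr' →₀ ℕ) (U : Tr →₀ ℕ) (M : P → ℕ) :
    Prop where
  support_G : ↑G.support ⊆ N.trans
  silent : N.SilentZ G
  places' : ∀ p, M' p ≠ 0 → p ∈ N'.places
  reachable' : N'.Reachable fun p => M' p + N'.preStep U' p
  balance : ∀ p, (M p : ℤ) = (M' p : ℤ) + (N'.preStep U' p : ℤ)
    + ((N.M0 p : ℤ) - (N'.M0 p : ℤ)) + N.tok G p - (N.preStep U p : ℤ)
  reachable : N.Reachable fun p => M p + N.preStep U p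

variable {N N'}

theorem coupled_init : N.Coupled N' 0 N'.M0 0 0 N.M0 where
  support_G := by simp
  silent := N.silentZ_zero
  places' := N'.M0_wf
  reachable' := by simpa [preStep] using Reachable.refl
  balance p := by simp [tok, preStep]
  reachable := by simpa [preStep] using Reachable.refl

namespace Coupled

variable {G : Tr →₀ ℤ} {M' : P → ℕ} {U' : Tr' →₀ ℕ} {U : Tr →₀ ℕ} {M : P → ℕ}

theorem fire_tau (hC : N.Coupled N' G M' U' U M) {t : Tr} {M₁ : P → ℕ} (ht : N.l t = none)
    (hf : N.fire M t M₁) : N.Coupled N' (G + Finsupp.single t 1) M' U' U M₁ where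
  support_G := by
    refine (Finset.coe_subset.2 Finsupp.support_add).trans ?_
    simpa using Set.insert_subset_iff.2 ⟨hf.1.1, hC.support_G⟩
  silent := hC.silent.add (N.silentZ_single ht)
  places' := hC.places'
  reachable' := hC.reachable'
  balance p := by
    have := hC.balance p; have := hf.1.2 p; have := hf.2 p
    rw [tok_add, tok_single]; omega
  reachable := hC.reachable.of_fire ⟨⟨hf.1.1, fun p => (hf.1.2 p).trans (Nat.le_add_right _ _)⟩,
    fun p => by dsimp only; have := hf.1.2 p; have := hf.2 p; omega⟩

theorem start (hC : N.Coupled N' G M' U' U M) {t : Tr} {t' : Tr'} (ht : N.enabled M t)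
    (ht' : N'.enabled M' t') :
    N.Coupled N' G (fun p => M' p - N'.pre t' p) (U' + Finsupp.single t' 1)
      (U + Finsupp.single t 1) (fun p => M p - N.pre t p) where
  support_G := hC.support_G
  silent := hC.silent
  places' p hp := hC.places' p fun h => hp (by simp [h])
  reachable' := by
    convert hC.reachable' using 2 with p
    have := ht'.2 p; rw [preStep_add, preStep_single]; omega
  balance p := by
    have := hC.balance p; have := ht.2 p; have := ht'.2 p
    rw [preStep_add, preStep_add, preStep_single, preStep_single]; omega
  reachable := by
    convert hC.reachable using 2 with p
    have := ht.2 p; rw [preStep_add, preStep_single]; omega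

theorem finish {t : Tr} {t' : Tr'}
    (hC : N.Coupled N' G M' (Finsupp.single t' 1 + U') (Finsupp.single t 1 + U) M)
    (ht : t ∈ N.trans) (ht' : t' ∈ N'.trans) {H : Tr →₀ ℕ} (hH : ↑H.support ⊆ N.trans)
    (hHl : ∀ u ∈ H.support, N.l u = none)
    (heq : ∀ p, (N'.post t' p : ℤ) - (N'.pre t' p : ℤ)
      = ((N.post t p : ℤ) - (N.pre t p : ℤ)) + N.tokN H p) :
    N.Coupled N' (G - H.mapRange (↑) Nat.cast_zero) (fun p => M' p + N'.post t' p) U' U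
      (fun p => M p + N.post t p) where
  support_G := by
    refine (Finset.coe_subset.2 Finsupp.support_sub).trans ?_
    simpa [Finsupp.support_mapRange_of_injective _ _ Nat.cast_injective] using
      ⟨hC.support_G, hH⟩
  silent := hC.silent.sub (N.silentZ_mapRange_natCast hHl)
  places' p hp := by
    by_cases h : M' p = 0
    · exact (N'.post_wf t' p (by simpa [h] using hp)).2
    · exact hC.places' p h
  reachable' := hC.reachable'.of_fire ⟨⟨ht', fun p => by
    dsimp only; rw [preStep_add, preStep_single]; omega⟩,
    fun p => by dsimp only; rw [preStep_add, preStep_single]; omega⟩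
  balance p := by
    have hbal := hC.balance p; have := heq p
    rw [preStep_add, preStep_add, preStep_single, preStep_single] at hbal
    rw [tok_sub, tok_mapRange_natCast]; omega
  reachable := hC.reachable.of_fire ⟨⟨ht, fun p => by
    dsimp only; rw [preStep_add, preStep_single]; omega⟩,
    fun p => by dsimp only; rw [preStep_add, preStep_single]; omega⟩

end Coupled

variable (N N')

/-- Condition (1) of the theorem. -/
def MatchesUpToSilent : Prop :=
  ∀ t ∈ N.trans, N.l t ≠ none →
    ∃ t' ∈ N'.trans, N'.l t' = N.l t ∧
      ∃ G : Tr →₀ ℕ, ↑G.support ⊆ N.trans ∧ (∀ u ∈ G.support, N.l u = none) ∧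
        ∀ p, (N'.post t' p : ℤ) - (N'.pre t' p : ℤ)
          = ((N.post t p : ℤ) - (N.pre t p : ℤ)) + N.tokN G p

/-- The conclusions (a)–(c) of condition (2). -/
structure SafePair (M' M : P → ℕ) : Prop where
  no_tau_chain : ∀ f : ℕ → (P → ℕ), f 0 = M → ¬ ∀ n, N.tauFire (f n) (f (n + 1))
  ready' : ∀ a : A, (∃ M'', N'.visFire a M' M'') →
    (∃ M'', N.visFire a M M'') ∨ ∃ M'', N.tauFire M M''
  ready : ∀ a : A, (∃ M'', N.visFire a M M'') → ∃ M'', N'.visFire a M' M''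

/-- Condition (2) of the theorem. -/
def CoupledSafe : Prop :=
  ∀ G M' U' U M, N.Coupled N' G M' U' U M → ↑U'.support ⊆ N'.trans → ↑U.support ⊆ N.trans →
    (∀ a, N'.labCount U' a = N.labCount U a) → N.SafePair N' M' M

structure STRel (s : (P → ℕ) × List Tr) (s' : (P → ℕ) × List Tr') : Prop where
  mem_trans : ∀ t ∈ s.2, t ∈ N.trans
  mem_trans' : ∀ t ∈ s'.2, t ∈ N'.trans
  map_l : s.2.map N.l = s'.2.map N'.l
  coupled : ∃ G, N.Coupled N' G s'.1 (Multiset.toFinsupp ↑s'.2) (Multiset.toFinsupp ↑s.2) s.1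

variable {N N'}

theorem Plain.not_stTr_none (hplain : N'.Plain) {s s' : (P → ℕ) × List Tr'} :
    ¬ N'.stTr s none s' := fun ⟨t, hl, hf, _⟩ => hplain.1 t hf.1.1 hl

theorem Plain.not_diverges (hplain : N'.Plain) (s : (P → ℕ) × List Tr') :
    ¬ N'.stLTS.Diverges s := fun ⟨_, _, hf⟩ => hplain.not_stTr_none (hf 0)

namespace STRel

theorem init : N.STRel N' (N.M0, []) (N'.M0, []) :=
  ⟨by simp, by simp, rfl, ⟨0, by simpa using coupled_init⟩⟩

variable {M M' : P → ℕ} {U : List Tr} {U' : List Tr'} {t : Tr} {t' : Tr'}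

theorem safe (hsafe : N.CoupledSafe N') {s : (P → ℕ) × List Tr} {s' : (P → ℕ) × List Tr'}
    (h : N.STRel N' s s') : N.SafePair N' s'.1 s.1 := by
  obtain ⟨G, hC⟩ := h.coupled
  refine hsafe _ _ _ _ _ hC (fun t ht => h.mem_trans' t (by simpa using ht))
    (fun t ht => h.mem_trans t (by simpa using ht)) fun a => ?_
  simp only [labCount_toFinsupp, Multiset.map_coe, h.map_l]

theorem acc (hsafe : N.CoupledSafe N') {s : (P → ℕ) × List Tr} {s' : (P → ℕ) × List Tr'}
    (h : N.STRel N' s s') : Acc (fun x y => N.stLTS.tr y none x) s := by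
  by_contra hacc
  obtain ⟨f, hf0, hf⟩ := (N.stLTS.diverges_iff_not_acc s).2 hacc
  exact (h.safe hsafe).no_tau_chain (fun n => (f n).1) (by rw [hf0])
    fun n => let ⟨t, hl, hfire, _⟩ := hf n; ⟨t, hl, hfire⟩

theorem tau {s s₁ : (P → ℕ) × List Tr} {s' : (P → ℕ) × List Tr'} (h : N.STRel N' s s')
    (htr : N.stTr s none s₁) : N.STRel N' s₁ s' := by
  obtain ⟨t, hl, hf, hU⟩ := htr
  obtain ⟨_, hC⟩ := h.coupled
  exact ⟨hU ▸ h.mem_trans, h.mem_trans', hU ▸ h.map_l, _, hU ▸ hC.fire_tau hl hf⟩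

theorem plus (h : N.STRel N' (M, U) (M', U')) {a : A} (hl : N.l t = some a)
    (ht : N.enabled M t) (hl' : N'.l t' = some a) (ht' : N'.enabled M' t') :
    N.STRel N' (fun p => M p - N.pre t p, U ++ [t])
      (fun p => M' p - N'.pre t' p, U' ++ [t']) := by
  obtain ⟨G, hC⟩ := h.coupled
  refine ⟨?_, ?_, by simp [h.map_l, hl, hl'], G, ?_⟩
  · simpa [or_imp, forall_and] using ⟨h.mem_trans, ht.1⟩
  · simpa [or_imp, forall_and] using ⟨h.mem_trans', ht'.1⟩
  · simpa [← Multiset.coe_add, Multiset.toFinsupp_add] using hC.start ht ht'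

theorem minus (hplain : N'.Plain) (hmatch : N.MatchesUpToSilent N')
    (h : N.STRel N' (M, U) (M', U')) {n : ℕ} (hn : U[n]? = some t) (hn' : U'[n]? = some t') :
    N.STRel N' (fun p => M p + N.post t p, U.eraseIdx n)
      (fun p => M' p + N'.post t' p, U'.eraseIdx n) := by
  have ht := h.mem_trans t (List.mem_of_getElem? hn)
  have ht' := h.mem_trans' t' (List.mem_of_getElem? hn')
  obtain ⟨_, hn'', hl'⟩ := List.exists_getElem?_of_map_eq h.map_l hn
  obtain rfl : t' = _ := Option.some_injective _ (hn'.symm.trans hn'')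
  obtain ⟨t'', ht'', hl'', H, hH, hHl, heq⟩ := hmatch t ht (hl' ▸ hplain.1 t' ht')
  obtain rfl : t'' = t' := hplain.2 t'' ht'' t' ht' (hl''.trans hl'.symm)
  obtain ⟨G, hC⟩ := h.coupled
  rw [Multiset.toFinsupp_coe_eq_single_add_eraseIdx hn,
    Multiset.toFinsupp_coe_eq_single_add_eraseIdx hn'] at hC
  exact ⟨fun u hu => h.mem_trans u (List.mem_of_mem_eraseIdx hu),
    fun u hu => h.mem_trans' u (List.mem_of_mem_eraseIdx hu),
    by simp only [← List.eraseIdx_map, h.map_l], _, hC.finish ht ht' hH hHl heq⟩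

theorem exists_optTr_right (hplain : N'.Plain) (hmatch : N.MatchesUpToSilent N')
    (hsafe : N.CoupledSafe N') {s₁ s₁' : (P → ℕ) × List Tr} {s₂ : (P → ℕ) × List Tr'}
    {η : Option (STLabel A)} (h : N.STRel N' s₁ s₂) (htr : N.stTr s₁ η s₁') :
    ∃ s₂', N'.stLTS.OptTr s₂ η s₂' ∧ N.STRel N' s₁' s₂' := by
  obtain ⟨M, U⟩ := s₁
  obtain ⟨M', U'⟩ := s₂
  obtain ⟨M₁, U₁⟩ := s₁'
  rcases η with _ | a | ⟨a, n⟩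
  · exact ⟨_, Or.inr ⟨rfl, rfl⟩, h.tau htr⟩
  · obtain ⟨t, hl, ht, hM₁, rfl⟩ := htr
    obtain rfl : M₁ = _ := funext hM₁
    obtain ⟨_, t', hl', hf'⟩ := (h.safe hsafe).ready a ⟨_, t, hl, ht, fun _ => rfl⟩
    exact ⟨_, Or.inl ⟨t', hl', hf'.1, fun _ => rfl, rfl⟩, h.plus hl ht hl' hf'.1⟩
  · obtain ⟨t, hn, hl, rfl, hM₁⟩ := htr
    obtain rfl : M₁ = _ := funext hM₁
    obtain ⟨t', hn', hl'⟩ := List.exists_getElem?_of_map_eq h.map_l hn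
    exact ⟨_, Or.inl ⟨t', hn', hl'.trans hl, rfl, fun _ => rfl⟩, h.minus hplain hmatch hn hn'⟩

theorem exists_taus_optTr_left (hplain : N'.Plain) (hmatch : N.MatchesUpToSilent N')
    (hsafe : N.CoupledSafe N') {s₁ : (P → ℕ) × List Tr} {s₂ s₂' : (P → ℕ) × List Tr'}
    {η : Option (STLabel A)} (h : N.STRel N' s₁ s₂) (htr : N'.stTr s₂ η s₂') :
    ∃ s₁d s₁', N.stLTS.Taus s₁ s₁d ∧ N.stLTS.OptTr s₁d η s₁' ∧ N.STRel N' s₁d s₂ ∧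
      N.STRel N' s₁' s₂' := by
  obtain ⟨M', U'⟩ := s₂
  obtain ⟨M₁', U₁'⟩ := s₂'
  rcases η with _ | a | ⟨a, n⟩
  · exact (hplain.not_stTr_none htr).elim
  · obtain ⟨t', hl', ht', hM₁', rfl⟩ := htr
    obtain rfl : M₁' = _ := funext hM₁'
    obtain ⟨_, hτ, hrel, t, hl, ht⟩ := (h.acc hsafe).exists_reflTransGen
      (p := (N.STRel N' · _)) (q := fun x => ∃ t, N.l t = some a ∧ N.enabled x.1 t) h
      (fun _ _ hx hxy => hx.tau hxy) fun x hx =>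
        ((hx.safe hsafe).ready' a ⟨_, t', hl', ht', fun _ => rfl⟩).imp
          (fun ⟨_, t, hl, hf⟩ => ⟨t, hl, hf.1⟩) fun ⟨_, t, hl, hf⟩ => ⟨(_, x.2), t, hl, hf, rfl⟩
    exact ⟨_, _, hτ, Or.inl ⟨t, hl, ht, fun _ => rfl, rfl⟩, hrel, hrel.plus hl ht hl' ht'⟩
  · obtain ⟨M, U⟩ := s₁
    obtain ⟨t', hn', hl', rfl, hM₁'⟩ := htr
    obtain rfl : M₁' = _ := funext hM₁'
    obtain ⟨t, hn, hl⟩ := List.exists_getElem?_of_map_eq h.map_l.symm hn'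
    exact ⟨_, _, .refl, Or.inl ⟨t, hn, hl.trans hl', rfl, fun _ => rfl⟩, h,
      h.minus hplain hmatch hn hn'⟩

end STRel

end PNet

theorem method_2ST_general {P Tr Tr' A : Type} (N : PNet P Tr A) (N' : PNet P Tr' A)
    (hplain : N'.Plain)
    (h1 : ∀ t ∈ N.trans, N.l t ≠ none →
      ∃ t' ∈ N'.trans, N'.l t' = N.l t ∧
        ∃ G : Tr →₀ ℕ, ↑G.support ⊆ N.trans ∧ (∀ u ∈ G.support, N.l u = none) ∧
          ∀ p, (N'.post t' p : ℤ) - (N'.pre t' p : ℤ)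
              = ((N.post t p : ℤ) - (N.pre t p : ℤ)) + N.tokN G p)
    (h2 : ∀ G : Tr →₀ ℤ, ↑G.support ⊆ N.trans → N.SilentZ G →
      ∀ (M' : P → ℕ) (U' : Tr' →₀ ℕ) (U : Tr →₀ ℕ) (M : P → ℕ),
        (∀ p, M' p ≠ 0 → p ∈ N'.places) →
        ↑U'.support ⊆ N'.trans → ↑U.support ⊆ N.trans →
        (∀ a, N'.labCount U' a = N.labCount U a) →
        N'.Reachable (fun p => M' p + N'.preStep U' p) →
        (∀ p, (M p : ℤ) = (M' p : ℤ) + (N'.preStep U' p : ℤ)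
            + ((N.M0 p : ℤ) - (N'.M0 p : ℤ)) + N.tok G p - (N.preStep U p : ℤ)) →
        N.Reachable (fun p => M p + N.preStep U p) →
        ((∀ f : ℕ → (P → ℕ), f 0 = M → ¬ ∀ n, N.tauFire (f n) (f (n + 1))) ∧
         (∀ a : A, (∃ M'', N'.visFire a M' M'') →
            (∃ M'', N.visFire a M M'') ∨ ∃ M'', N.tauFire M M'') ∧
         ∀ a : A, (∃ M'', N.visFire a M M'') → ∃ M'', N'.visFire a M' M'')) :
    BranchingSTBisimilarED N N' := by
  have hsafe : N.CoupledSafe N' := fun G M' U' U M hC hU' hU hlab =>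
    let ⟨hdiv, hready', hready⟩ := h2 G hC.support_G hC.silent M' U' U M hC.places' hU' hU hlab
      hC.reachable' hC.balance hC.reachable
    ⟨hdiv, hready', hready⟩
  refine ⟨N.STRel N', ⟨PNet.STRel.init, ?_, ?_⟩, fun s₁ s₂ h => ?_⟩
  · intro s₁ s₂ η s₁' h htr
    obtain ⟨s₂', hopt, h'⟩ := h.exists_optTr_right hplain h1 hsafe htr
    exact ⟨s₂, s₂', .refl, hopt, h, h'⟩
  · exact fun s₁ s₂ η s₂' h => h.exists_taus_optTr_left hplain h1 hsafe
  · exact iff_of_false (fun hd => (N.stLTS.diverges_iff_not_acc s₁).1 hd (h.acc hsafe))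
      (hplain.not_diverges s₂)

/-- the second method (Lemma 2ST) for establishing
`N ≈Δ_bSTb N'`, with `N'` plain, `S' ⊆ S` and `M0' = M0 ↾ S'`. -/
theorem method_2ST {P Tr Tr' A : Type} (N : PNet P Tr A) (N' : PNet P Tr' A)
    (hplain : N'.Plain) (hplaces : N'.places ⊆ N.places)
    (hM0 : ∀ p ∈ N'.places, N'.M0 p = N.M0 p)
    (h1 : ∀ t ∈ N.trans, N.l t ≠ none →
      ∃ t' ∈ N'.trans, N'.l t' = N.l t ∧
        ∃ G : Tr →₀ ℕ, ↑G.support ⊆ N.trans ∧ (∀ u ∈ G.support, N.l u = none) ∧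
          ∀ p, (N'.post t' p : ℤ) - (N'.pre t' p : ℤ)
              = ((N.post t p : ℤ) - (N.pre t p : ℤ)) + N.tokN G p)
    (h2 : ∀ G : Tr →₀ ℤ, ↑G.support ⊆ N.trans → N.SilentZ G →
      ∀ (M' : P → ℕ) (U' : Tr' →₀ ℕ) (U : Tr →₀ ℕ) (M : P → ℕ),
        (∀ p, M' p ≠ 0 → p ∈ N'.places) →
        ↑U'.support ⊆ N'.trans → ↑U.support ⊆ N.trans →
        (∀ a, N'.labCount U' a = N.labCount U a) →
        N'.Reachable (fun p => M' p + N'.preStep U' p) →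
        (∀ p, (M p : ℤ) = (M' p : ℤ) + (N'.preStep U' p : ℤ)
            + ((N.M0 p : ℤ) - (N'.M0 p : ℤ)) + N.tok G p - (N.preStep U p : ℤ)) →
        N.Reachable (fun p => M p + N.preStep U p) →
        ((∀ f : ℕ → (P → ℕ), f 0 = M → ¬ ∀ n, N.tauFire (f n) (f (n + 1))) ∧
         (∀ a : A, (∃ M'', N'.visFire a M' M'') →
            (∃ M'', N.visFire a M M'') ∨ ∃ M'', N.tauFire M M'') ∧
         ∀ a : A, (∃ M'', N.visFire a M M'') → ∃ M'', N'.visFire a M' M'')) :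
    BranchingSTBisimilarED N N' :=
  method_2ST_general N N' hplain h1 h2
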